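/- arXiv:2004.01586 — 3 statements merged into one kernel-verified Lean document; each statement's English description precedes it below -/
import Mathlib

section
/- A general homogeneous polynomial of degree d ≥ 2 in three variables has slice rank exactly 2; equivalently, the set of degree-d forms in k[x₀,x₁,x₂] that can be written as ℓ·g with ℓ linear is a proper Zariski-closed subset of the space of all degree-d forms. -/
open MvPolynomial

/-!
A form of degree `a + b` is a product of forms of degrees `a` and `b` iff some nonzero tensor `t`
in (forms of degree `a`) ⊗ (forms of degree `b`) satisfies the Segre quadrics, so that
`t = x ⊗ y` has rank one, and has image under multiplication proportional to the given form.
These equations are homogeneous in `t`, with coefficients polynomial in the coefficients `c` of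
the form, so the set of such `c` is Zariski closed by the main theorem of elimination theory.
That theorem is proved directly: by the Nullstellensatz, homogeneous polynomials have no common
nontrivial zero iff their ideal contains all monomials of some degree `s`, i.e. iff the degree-`s`
Macaulay matrix has full rank, i.e. iff one of its maximal minors, a polynomial in `c`, does not
vanish.

The form `x₂ ^ d + x₀ ^ (d - 1) * x₁` has no linear factor: every linear form vanishes at a
point where this form does not.
-/

abbrev Exponents (σ : Type*) (n : ℕ) := {μ : σ →₀ ℕ // (μ.sum fun _ e => e) = n}

instance Exponents.finite {σ : Type*} [Finite σ] (n : ℕ) : Finite (Exponents σ n) :=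
  ((Finsupp.finite_of_degree_le n).subset fun _ (hμ : Finsupp.degree _ = n) => hμ.le).to_subtype

noncomputable instance Exponents.fintype {σ : Type*} [Finite σ] (n : ℕ) :
    Fintype (Exponents σ n) :=
  Fintype.ofFinite _

theorem exists_eq_mul_of_mul_eq_mul {K α β : Type*} [Field K] {t : α × β → K} (ht : t ≠ 0)
    (h : ∀ p q : α × β, t p * t q = t (p.1, q.2) * t (q.1, p.2)) :
    ∃ (x : α → K) (y : β → K), x ≠ 0 ∧ y ≠ 0 ∧ t = fun p => x p.1 * y p.2 := by
  obtain ⟨p₀, hp₀⟩ := Function.ne_iff.1 ht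
  refine ⟨fun a => t (a, p₀.2), fun b => t (p₀.1, b) / t p₀, Function.ne_iff.2 ⟨p₀.1, hp₀⟩,
    Function.ne_iff.2 ⟨p₀.2, by simp [div_self hp₀]⟩, funext fun p => ?_⟩
  rw [mul_div_assoc', ← h p p₀, mul_div_cancel_right₀ _ hp₀]

theorem exists_eq_smul_of_mul_eq_mul {K ι : Type*} [Field K] {v w : ι → K} (hw : w ≠ 0)
    (h : ∀ i j, v i * w j = v j * w i) : ∃ u : K, v = u • w := by
  obtain ⟨i, hi⟩ := Function.ne_iff.1 hw
  refine ⟨v i / w i, funext fun j => ?_⟩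
  rw [Pi.smul_apply, smul_eq_mul, div_mul_eq_mul_div, h, mul_div_cancel_right₀ _ hi]

theorem Submodule.span_range_eq_top_iff_exists_det_ne_zero {K R C : Type*} [Field K] [Fintype R]
    [DecidableEq R] (v : C → R → K) :
    Submodule.span K (Set.range v) = ⊤ ↔ ∃ ι : R → C, (Matrix.of fun r => v (ι r)).det ≠ 0 := by
  constructor
  · intro hv
    obtain ⟨κ, a, -, hspan, hli⟩ := exists_linearIndependent' K v
    rw [hv] at hspan
    let e : κ ≃ R := (Module.Basis.mk hli hspan.ge).indexEquiv (Pi.basisFun K R)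
    refine ⟨a ∘ e.symm, ?_⟩
    rw [← Pi.basisFun_det_apply, ← isUnit_iff_ne_zero, ← Module.Basis.is_basis_iff_det]
    refine ⟨hli.comp e.symm e.symm.injective, ?_⟩
    rwa [← e.symm.surjective.range_comp] at hspan
  · rintro ⟨ι, hι⟩
    rw [← isUnit_iff_ne_zero, ← Pi.basisFun_det_apply, ← Module.Basis.is_basis_iff_det] at hι
    exact eq_top_iff.2 (hι.2 ▸ Submodule.span_mono (Set.range_comp_subset_range ι v))

namespace MvPolynomial

section Exponents

variable {R σ : Type*} [CommSemiring R] [Finite σ] {n : ℕ}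

theorem coeff_sum_monomial (x : Exponents σ n → R) (κ : Exponents σ n) :
    coeff κ.1 (∑ μ, monomial μ.1 (x μ)) = x κ := by
  classical
  rw [coeff_sum, Finset.sum_eq_single κ (fun μ _ hμ => by
    rw [coeff_monomial, if_neg fun h => hμ (Subtype.ext h)]) (by simp), coeff_monomial, if_pos rfl]

theorem sum_monomial_eq_zero_iff (x : Exponents σ n → R) :
    ∑ μ, monomial μ.1 (x μ) = 0 ↔ x = 0 :=
  ⟨fun h => by ext κ; rw [← coeff_sum_monomial x κ, h, coeff_zero, Pi.zero_apply],
    fun h => by simp [h]⟩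

theorem isHomogeneous_sum_monomial (x : Exponents σ n → R) :
    (∑ μ, monomial μ.1 (x μ)).IsHomogeneous n :=
  IsHomogeneous.sum _ _ _ fun μ _ => isHomogeneous_monomial _ μ.2

theorem IsHomogeneous.sum_monomial_coeff {p : MvPolynomial σ R} (hp : p.IsHomogeneous n) :
    ∑ μ : Exponents σ n, monomial μ.1 (coeff μ.1 p) = p := by
  classical
  ext v
  by_cases hv : v.degree = n
  · exact coeff_sum_monomial (fun μ => coeff μ.1 p) ⟨v, hv⟩
  · rw [hp.coeff_eq_zero hv, coeff_sum]
    exact Finset.sum_eq_zero fun μ _ => by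
      rw [coeff_monomial, if_neg fun h : μ.1 = v => hv (h ▸ μ.2)]

theorem eval_homogeneousComponent (t : σ → R) (s : ℕ) (q : MvPolynomial σ R) :
    eval t (homogeneousComponent s q) =
      ∑ μ : Exponents σ s, coeff μ.1 q * μ.1.prod fun i e => t i ^ e := by
  conv_lhs => rw [← (homogeneousComponent_isHomogeneous s q).sum_monomial_coeff]
  simp only [map_sum, eval_monomial, coeff_homogeneousComponent]
  exact Finset.sum_congr rfl fun μ _ => by rw [if_pos]; exact μ.2

variable (R) in
noncomputable def degreeCoeffs (s : ℕ) : MvPolynomial σ R →ₗ[R] (Exponents σ s → R) :=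
  LinearMap.pi fun μ => lcoeff R μ.1

end Exponents

theorem mem_span_monomial_mul_of_mem_ideal_span {R σ J : Type*} [CommSemiring R] [Fintype J]
    {F : J → MvPolynomial σ R} {q : MvPolynomial σ R} (hq : q ∈ Ideal.span (Set.range F)) :
    q ∈ Submodule.span R (Set.range fun p : J × (σ →₀ ℕ) => monomial p.2 1 * F p.1) := by
  obtain ⟨h, rfl⟩ := Ideal.mem_span_range_iff_exists_fun.1 hq
  refine Submodule.sum_mem _ fun j _ => ?_
  conv => enter [2]; rw [(h j).as_sum, Finset.sum_mul]
  refine Submodule.sum_mem _ fun ν _ => ?_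
  rw [show monomial ν (coeff ν (h j)) * F j = coeff ν (h j) • (monomial ν 1 * F j) by
    rw [← smul_mul_assoc, smul_monomial, smul_eq_mul, mul_one]]
  exact Submodule.smul_mem _ _ (Submodule.subset_span ⟨(j, ν), rfl⟩)

section Elimination

variable {k σ τ J : Type*} [Field k] [Finite τ]

theorem exists_monomial_mem_of_zeroLocus_subset [IsAlgClosed k] {I : Ideal (MvPolynomial τ k)}
    (hI : zeroLocus k I ⊆ {0}) : ∃ s, ∀ μ : Exponents τ s, monomial μ.1 1 ∈ I := by
  classical
  have := Fintype.ofFinite τ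
  have hX : ∀ i, ∃ n, (X i : MvPolynomial τ k) ^ n ∈ I := fun i => by
    rw [← Ideal.mem_radical_iff, ← vanishingIdeal_zeroLocus_eq_radical (K := k)]
    intro x hx
    simp [Set.mem_singleton_iff.1 (hI hx)]
  choose n hn using hX
  refine ⟨Finset.univ.sup n * Fintype.card τ + 1, fun μ => ?_⟩
  obtain ⟨i, -, hi⟩ : ∃ i ∈ Finset.univ, Finset.univ.sup n < μ.1 i := by
    refine Finset.exists_lt_of_sum_lt ?_
    rw [Finset.sum_const, Finset.card_univ, smul_eq_mul, mul_comm, ← Finsupp.degree_eq_sum]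
    have hμ : Finsupp.degree μ.1 = _ := μ.2
    rw [hμ]
    exact Nat.lt_succ_self _
  have hle : Finsupp.single i (n i) ≤ μ.1 :=
    Finsupp.single_le_iff.2 ((Finset.le_sup (Finset.mem_univ i)).trans hi.le)
  rw [← tsub_add_cancel_of_le hle, ← one_mul (1 : k), ← monomial_mul, ← X_pow_eq_monomial]
  exact I.mul_mem_left _ (hn i)

theorem span_degreeCoeffs_ne_top_of_eval_eq_zero {F : J → MvPolynomial τ k} {e : J → ℕ}
    (hF : ∀ j, (F j).IsHomogeneous (e j)) {t : τ → k} (ht : t ≠ 0)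
    (hzero : ∀ j, eval t (F j) = 0) (s : ℕ) :
    Submodule.span k (Set.range fun p : J × (τ →₀ ℕ) =>
      degreeCoeffs k s (monomial p.2 1 * F p.1)) ≠ ⊤ := by
  classical
  obtain ⟨i, hi⟩ := Function.ne_iff.1 ht
  -- `E` vanishes on the degree-`s` part of the ideal of the `F j`, but not on `X i ^ s`.
  let E := Fintype.linearCombination k fun μ : Exponents τ s => μ.1.prod fun i e => t i ^ e
  have hE (q : MvPolynomial τ k) : E (degreeCoeffs k s q) = eval t (homogeneousComponent s q) := by
    simp only [E, Fintype.linearCombination_apply, eval_homogeneousComponent, smul_eq_mul]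
    rfl
  have hker (p : J × (τ →₀ ℕ)) : E (degreeCoeffs k s (monomial p.2 1 * F p.1)) = 0 := by
    have hmem := (isHomogeneous_monomial (d := p.2) (1 : k) rfl).mul (hF p.1)
    rw [hE, homogeneousComponent_of_mem hmem]
    split_ifs <;> simp [hzero]
  intro htop
  let μ₀ : Exponents τ s := ⟨Finsupp.single i s, by simp⟩
  have h₀ : Pi.single μ₀ (1 : k) ∈ LinearMap.ker E :=
    Submodule.span_le.2 (Set.range_subset_iff.2 hker) (htop ▸ Submodule.mem_top)
  rw [LinearMap.mem_ker, Fintype.linearCombination_apply_single, one_smul] at h₀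
  exact pow_ne_zero s (by simpa using hi) (by simpa [μ₀] using h₀)

theorem exists_eval_eq_zero_of_forall_span_degreeCoeffs_ne_top [IsAlgClosed k] [Fintype J]
    {F : J → MvPolynomial τ k}
    (h : ∀ s, Submodule.span k (Set.range fun p : J × (τ →₀ ℕ) =>
      degreeCoeffs k s (monomial p.2 1 * F p.1)) ≠ ⊤) :
    ∃ t ≠ 0, ∀ j, eval t (F j) = 0 := by
  classical
  by_contra! hno
  obtain ⟨s, hs⟩ := exists_monomial_mem_of_zeroLocus_subset (I := Ideal.span (Set.range F))
    fun x hx => Set.mem_singleton_iff.2 <| by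
      by_contra hx0
      obtain ⟨j, hj⟩ := hno x hx0
      exact hj (hx _ (Ideal.subset_span ⟨j, rfl⟩))
  refine h s (eq_top_iff.2 fun w _ => ?_)
  rw [Set.range_comp' (degreeCoeffs k s), Submodule.span_image, pi_eq_sum_univ w]
  refine Submodule.sum_mem _ fun μ _ => Submodule.smul_mem _ _ ?_
  convert Submodule.mem_map_of_mem (mem_span_monomial_mul_of_mem_ideal_span (hs μ)) using 2
  simp [degreeCoeffs, coeff_monomial, Subtype.ext_iff]

theorem exists_zeroSet_eq_setOf_exists_eval_eq_zero [IsAlgClosed k] [Fintype J]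
    (B : J → MvPolynomial τ (MvPolynomial σ k)) (e : J → ℕ)
    (hB : ∀ j, (B j).IsHomogeneous (e j)) :
    ∃ I : Set (MvPolynomial σ k), ∀ c : σ → k,
      (∀ p ∈ I, eval c p = 0) ↔ ∃ t ≠ 0, ∀ j, eval t (map (eval c) (B j)) = 0 := by
  classical
  let A (s : ℕ) (p : J × (τ →₀ ℕ)) (μ : Exponents τ s) : MvPolynomial σ k :=
    coeff μ.1 (monomial p.2 1 * B p.1)
  refine ⟨⋃ s, Set.range fun ι : Exponents τ s → J × (τ →₀ ℕ) =>
    (Matrix.of fun r => A s (ι r)).det, fun c => ?_⟩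
  have hdet (s : ℕ) (ι : Exponents τ s → J × (τ →₀ ℕ)) :
      eval c (Matrix.of fun r => A s (ι r)).det = (Matrix.of fun r =>
        degreeCoeffs k s (monomial (ι r).2 1 * map (eval c) (B (ι r).1))).det := by
    rw [RingHom.map_det]
    congr 1
    ext r μ
    simp [A, degreeCoeffs, ← coeff_map]
  have hF (j : J) : (map (eval c) (B j)).IsHomogeneous (e j) := (hB j).map _
  constructor
  · intro hI
    refine exists_eval_eq_zero_of_forall_span_degreeCoeffs_ne_top fun s hs => ?_
    obtain ⟨ι, hι⟩ := (Submodule.span_range_eq_top_iff_exists_det_ne_zero _).1 hs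
    exact hι (hdet s ι ▸ hI _ (Set.mem_iUnion.2 ⟨s, ι, rfl⟩))
  · rintro ⟨t, ht, hzero⟩ p hp
    obtain ⟨s, ι, rfl⟩ := Set.mem_iUnion.1 hp
    by_contra hne
    exact span_degreeCoeffs_ne_top_of_eval_eq_zero hF ht hzero s
      ((Submodule.span_range_eq_top_iff_exists_det_ne_zero _).2 ⟨ι, hdet s ι ▸ hne⟩)

end Elimination

section FormOfTensor

variable {R S σ : Type*} [CommSemiring R] [CommSemiring S] [Finite σ] {a b : ℕ}

noncomputable def formOfTensor (t : Exponents σ a × Exponents σ b → R) : MvPolynomial σ R :=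
  ∑ p, monomial (p.1.1 + p.2.1) (t p)

theorem map_formOfTensor (f : R →+* S) (t : Exponents σ a × Exponents σ b → R) :
    map f (formOfTensor t) = formOfTensor (f ∘ t) := by
  simp [formOfTensor]

theorem formOfTensor_mul (x : Exponents σ a → R) (y : Exponents σ b → R) :
    formOfTensor (fun p => x p.1 * y p.2) =
      (∑ μ, monomial μ.1 (x μ)) * ∑ ν, monomial ν.1 (y ν) := by
  simp [formOfTensor, Finset.sum_mul_sum, monomial_mul, Fintype.sum_prod_type]

theorem isHomogeneous_coeff_formOfTensor_X (κ : σ →₀ ℕ) :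
    (coeff κ (formOfTensor
      (X : Exponents σ a × Exponents σ b → MvPolynomial _ R))).IsHomogeneous 1 := by
  classical
  simp only [formOfTensor, coeff_sum, coeff_monomial]
  exact IsHomogeneous.sum _ _ _ fun p _ => by
    split_ifs
    exacts [isHomogeneous_X _ _, isHomogeneous_zero _ _ _]

end FormOfTensor

section Products

variable {k σ : Type*} [Field k] [Finite σ] {a b n : ℕ}

theorem exists_tensor_iff_exists_isHomogeneous_mul [Nonempty σ] (hab : a + b = n)
    (c : Exponents σ n → k) :
    (∃ t ≠ 0, (∀ p q : Exponents σ a × Exponents σ b, t p * t q = t (p.1, q.2) * t (q.1, p.2)) ∧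
      ∀ κ l : Exponents σ n, c l * coeff κ.1 (formOfTensor t) = c κ * coeff l.1 (formOfTensor t)) ↔
    ∃ f g : MvPolynomial σ k, f.IsHomogeneous a ∧ g.IsHomogeneous b ∧
      ∑ κ, monomial κ.1 (c κ) = f * g := by
  constructor
  · rintro ⟨t, ht, hsegre, hprop⟩
    obtain ⟨x, y, hx, hy, rfl⟩ := exists_eq_mul_of_mul_eq_mul ht hsegre
    rw [formOfTensor_mul] at hprop
    set f := ∑ μ, monomial μ.1 (x μ)
    set g := ∑ ν, monomial ν.1 (y ν)
    have hfg : (f * g).IsHomogeneous n := hab ▸ (isHomogeneous_sum_monomial x).mul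
      (isHomogeneous_sum_monomial y)
    have hfg₀ : (fun κ : Exponents σ n => coeff κ.1 (f * g)) ≠ 0 := by
      rw [Ne, ← sum_monomial_eq_zero_iff, hfg.sum_monomial_coeff]
      exact mul_ne_zero ((sum_monomial_eq_zero_iff x).not.2 hx)
        ((sum_monomial_eq_zero_iff y).not.2 hy)
    obtain ⟨u, rfl⟩ := exists_eq_smul_of_mul_eq_mul hfg₀ fun i j => hprop j i
    refine ⟨C u * f, g, (isHomogeneous_sum_monomial x).C_mul u, isHomogeneous_sum_monomial y, ?_⟩
    simp only [Pi.smul_apply, smul_eq_mul, ← C_mul_monomial, ← Finset.mul_sum,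
      hfg.sum_monomial_coeff, mul_assoc]
  · rintro ⟨f, g, hf, hg, hfg⟩
    suffices ∃ (x : Exponents σ a → k) (y : Exponents σ b → k), x ≠ 0 ∧ y ≠ 0 ∧
        ∀ κ l : Exponents σ n, c l * coeff κ.1 (formOfTensor fun p => x p.1 * y p.2) =
          c κ * coeff l.1 (formOfTensor fun p => x p.1 * y p.2) by
      obtain ⟨x, y, hx, hy, h⟩ := this
      obtain ⟨μ, hμ⟩ := Function.ne_iff.1 hx
      obtain ⟨ν, hν⟩ := Function.ne_iff.1 hy
      exact ⟨_, Function.ne_iff.2 ⟨(μ, ν), mul_ne_zero hμ hν⟩, fun p q => by ring, h⟩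
    by_cases h₀ : f = 0 ∨ g = 0
    · have hc : c = 0 := by
        rw [← sum_monomial_eq_zero_iff, hfg]
        rcases h₀ with rfl | rfl <;> simp
      obtain ⟨i⟩ := ‹Nonempty σ›
      refine ⟨fun _ => 1, fun _ => 1,
        Function.ne_iff.2 ⟨⟨Finsupp.single i a, by simp⟩, one_ne_zero⟩,
        Function.ne_iff.2 ⟨⟨Finsupp.single i b, by simp⟩, one_ne_zero⟩, by simp [hc]⟩
    · push Not at h₀
      refine ⟨fun μ => coeff μ.1 f, fun ν => coeff ν.1 g, ?_, ?_, ?_⟩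
      · rw [Ne, ← sum_monomial_eq_zero_iff, hf.sum_monomial_coeff]
        exact h₀.1
      · rw [Ne, ← sum_monomial_eq_zero_iff, hg.sum_monomial_coeff]
        exact h₀.2
      · intro κ l
        rw [formOfTensor_mul (fun μ => coeff μ.1 f) (fun ν => coeff ν.1 g), hf.sum_monomial_coeff,
          hg.sum_monomial_coeff, ← hfg, coeff_sum_monomial, coeff_sum_monomial, mul_comm]

theorem exists_zeroSet_eq_setOf_isHomogeneous_eq_mul [IsAlgClosed k] [Nonempty σ]
    (hab : a + b = n) :
    ∃ I : Set (MvPolynomial (Exponents σ n) k),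
      {f : MvPolynomial σ k | f.IsHomogeneous n ∧
        ∃ g h : MvPolynomial σ k, g.IsHomogeneous a ∧ h.IsHomogeneous b ∧ f = g * h} =
      {f | f.IsHomogeneous n ∧ ∀ p ∈ I, eval (fun μ => f.coeff μ.1) p = 0} := by
  let M (κ : Exponents σ n) :
      MvPolynomial (Exponents σ a × Exponents σ b) (MvPolynomial (Exponents σ n) k) :=
    coeff κ.1 (formOfTensor X)
  have hM (c : Exponents σ n → k) (t : Exponents σ a × Exponents σ b → k) (κ : Exponents σ n) :
      eval t (map (eval c) (M κ)) = coeff κ.1 (formOfTensor t) := by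
    rw [← coeff_map, ← coeff_map, map_formOfTensor, map_formOfTensor]
    congr
    ext p
    simp
  obtain ⟨I, hI⟩ := exists_zeroSet_eq_setOf_exists_eval_eq_zero
    (Sum.elim (fun pq : (Exponents σ a × Exponents σ b) × (Exponents σ a × Exponents σ b) =>
        X pq.1 * X pq.2 - X (pq.1.1, pq.2.2) * X (pq.2.1, pq.1.2))
      fun κl : Exponents σ n × Exponents σ n => C (X κl.2) * M κl.1 - C (X κl.1) * M κl.2)
    (Sum.elim (fun _ => 2) fun _ => 1) <| by
      rintro (⟨p, q⟩ | ⟨κ, l⟩)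
      · exact ((isHomogeneous_X _ p).mul (isHomogeneous_X _ q)).sub
          ((isHomogeneous_X _ _).mul (isHomogeneous_X _ _))
      · exact ((isHomogeneous_coeff_formOfTensor_X _).C_mul _).sub
          ((isHomogeneous_coeff_formOfTensor_X _).C_mul _)
  refine ⟨I, Set.ext fun f => and_congr_right fun hf => ?_⟩
  conv_lhs => rw [← hf.sum_monomial_coeff]
  rw [hI, ← exists_tensor_iff_exists_isHomogeneous_mul hab]
  simp only [Sum.forall, Prod.forall, Sum.elim_inl, Sum.elim_inr, map_sub, map_mul, map_X, map_C,
    eval_X, eval_C, hM, sub_eq_zero]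

end Products

theorem not_dvd_X_two_pow_add_X_zero_pow_mul_X_one {k : Type*} [Field k] {d : ℕ} (hd : 2 ≤ d)
    {ℓ : MvPolynomial (Fin 3) k} (hℓ : ℓ.IsHomogeneous 1) :
    ¬ ℓ ∣ X 2 ^ d + X 0 ^ (d - 1) * X 1 := by
  rintro ⟨g, hg⟩
  rw [← mem_homogeneousSubmodule, homogeneousSubmodule_one_eq_span_X] at hℓ
  obtain ⟨a, rfl⟩ := (Submodule.mem_span_range_iff_exists_fun k).1 hℓ
  have hvanish (v : Fin 3 → k) (hv : a 0 * v 0 + a 1 * v 1 + a 2 * v 2 = 0) :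
      v 2 ^ d + v 0 ^ (d - 1) * v 1 = 0 := by
    simpa [Fin.sum_univ_three, hv] using congrArg (eval v) hg
  have hd₁ : d - 1 ≠ 0 := by omega
  have ha₂ : a 2 ≠ 0 := fun h => by simpa [h, hd₁] using hvanish ![0, 0, 1]
  by_cases ha₁ : a 1 = 0
  · have h₀ := hvanish ![a 2, 0, -a 0] (by simp [ha₁]; ring)
    have h₁ := hvanish ![a 2, 1, -a 0] (by simp [ha₁]; ring)
    simp only [Matrix.cons_val_zero, Matrix.cons_val_one, Matrix.cons_val_two, Matrix.head_cons,
      Matrix.tail_cons, mul_zero, mul_one, add_zero] at h₀ h₁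
    exact pow_ne_zero (d - 1) ha₂ (by linear_combination h₁ - h₀)
  · simpa [ha₁, hd₁] using hvanish ![0, -a 2, a 1] (by simp; ring)

end MvPolynomial

/-- A general degree-`d` form in three variables (`d ≥ 2`) has slice rank exactly 2:
the set of degree-`d` forms of the shape `ℓ·g` with `ℓ` linear is a proper Zariski-closed
subset of the space of all degree-`d` forms (closedness is expressed by cutting the set
out, inside the degree-`d` forms, by polynomial equations in the coefficients). -/
theorem stmt_4 {k : Type*} [Field k] [IsAlgClosed k] (d : ℕ) (hd : 2 ≤ d) :
    (∃ I : Set (MvPolynomial {μ : Fin 3 →₀ ℕ // (μ.sum fun _ e => e) = d} k),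
      {f : MvPolynomial (Fin 3) k | f.IsHomogeneous d ∧
          ∃ ℓ g : MvPolynomial (Fin 3) k, ℓ.IsHomogeneous 1 ∧
            g.IsHomogeneous (d - 1) ∧ f = ℓ * g}
        = {f : MvPolynomial (Fin 3) k | f.IsHomogeneous d ∧
            ∀ p ∈ I, eval (fun μ => f.coeff μ.1) p = 0}) ∧
    (∃ f : MvPolynomial (Fin 3) k, f.IsHomogeneous d ∧
      ¬ ∃ ℓ g : MvPolynomial (Fin 3) k, ℓ.IsHomogeneous 1 ∧
        g.IsHomogeneous (d - 1) ∧ f = ℓ * g) := by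
  refine ⟨exists_zeroSet_eq_setOf_isHomogeneous_eq_mul (by omega : 1 + (d - 1) = d),
    X 2 ^ d + X 0 ^ (d - 1) * X 1, ?_, ?_⟩
  · have h := (isHomogeneous_X_pow (R := k) (0 : Fin 3) (d - 1)).mul (isHomogeneous_X k 1)
    rw [Nat.sub_add_cancel (by omega : 1 ≤ d)] at h
    exact (isHomogeneous_X_pow 2 d).add h
  · rintro ⟨ℓ, g, hℓ, -, hfg⟩
    exact not_dvd_X_two_pow_add_X_zero_pow_mul_X_one hd hℓ ⟨g, hfg⟩
end

section
/- If a homogeneous polynomial u of degree d over ℝ has complex strength s (a decomposition u = Σ_{h=1}^s f_h g_h with f_h, g_h homogeneous over ℂ of positive degree), then u has real strength at most 2s: u admits a decomposition with 2s terms in which all factors have real coefficients. -/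
/-!
Write every complex factor as `f = Re f + i Im f`. Since `u` is real, it is the real part of
`∑ f g`, that is `u = ∑ (Re f * Re g - Im f * Im g)`; the real and imaginary parts of a form of
degree `k` are again forms of degree `k`, so this is a real decomposition with `2s` terms.
-/

open MvPolynomial

namespace MvPolynomial

variable {σ : Type*}

noncomputable def re : MvPolynomial σ ℂ →+ MvPolynomial σ ℝ where
  toFun p := AddMonoidAlgebra.ofCoeff
    (Finsupp.mapRange Complex.re Complex.zero_re (AddMonoidAlgebra.coeff p))
  map_zero' := rfl
  map_add' p q := by ext m; exact Complex.add_re (coeff m p) (coeff m q)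

noncomputable def im (p : MvPolynomial σ ℂ) : MvPolynomial σ ℝ :=
  AddMonoidAlgebra.ofCoeff
    (Finsupp.mapRange Complex.im Complex.zero_im (AddMonoidAlgebra.coeff p))

@[simp] lemma coeff_re (m : σ →₀ ℕ) (p : MvPolynomial σ ℂ) :
    coeff m (re p) = (coeff m p).re := rfl

@[simp] lemma coeff_im (m : σ →₀ ℕ) (p : MvPolynomial σ ℂ) :
    coeff m (im p) = (coeff m p).im := rfl

lemma IsHomogeneous.re {p : MvPolynomial σ ℂ} {k : ℕ} (hp : p.IsHomogeneous k) :
    (re p).IsHomogeneous k :=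
  fun _ hm => hp fun h => hm (by simp [h])

lemma IsHomogeneous.im {p : MvPolynomial σ ℂ} {k : ℕ} (hp : p.IsHomogeneous k) :
    (im p).IsHomogeneous k :=
  fun _ hm => hp fun h => hm (by simp [h])

@[simp] lemma re_map (p : MvPolynomial σ ℝ) : re (map (algebraMap ℝ ℂ) p) = p := by
  ext; simp [coeff_map]

lemma re_mul (p q : MvPolynomial σ ℂ) : re (p * q) = re p * re q - im p * im q := by
  classical
  ext m
  simp [coeff_mul, Complex.re_sum, Finset.sum_sub_distrib]

def HasStrengthDecomposition {R : Type*} [CommSemiring R] (u : MvPolynomial σ R) (d r : ℕ) :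
    Prop :=
  ∃ (e : Fin r → ℕ) (p q : Fin r → MvPolynomial σ R),
    (∀ i, 0 < e i ∧ e i < d ∧ (p i).IsHomogeneous (e i) ∧ (q i).IsHomogeneous (d - e i)) ∧
      u = ∑ i, p i * q i

lemma HasStrengthDecomposition.add {R : Type*} [CommSemiring R] {u v : MvPolynomial σ R}
    {d r t : ℕ} (hu : u.HasStrengthDecomposition d r) (hv : v.HasStrengthDecomposition d t) :
    (u + v).HasStrengthDecomposition d (r + t) := by
  obtain ⟨e, p, q, hpq, rfl⟩ := hu
  obtain ⟨e', p', q', hpq', rfl⟩ := hv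
  refine ⟨Fin.append e e', Fin.append p p', Fin.append q q', fun i => ?_, ?_⟩
  · induction i using Fin.addCases with
    | left i => simpa using hpq i
    | right i => simpa using hpq' i
  · simp [Fin.sum_univ_add]

lemma HasStrengthDecomposition.of_map_complex {u : MvPolynomial σ ℝ} {d s : ℕ}
    (h : (map (algebraMap ℝ ℂ) u).HasStrengthDecomposition d s) :
    u.HasStrengthDecomposition d (2 * s) := by
  obtain ⟨e, f, g, hfg, hdec⟩ := h
  have hu : u = ∑ i, re (f i) * re (g i) + ∑ i, im (f i) * -im (g i) := by
    rw [← re_map u, hdec, map_sum, ← Finset.sum_add_distrib]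
    simp [re_mul, sub_eq_add_neg]
  rw [two_mul, hu]
  refine .add ⟨e, _, _, fun i => ?_, rfl⟩ ⟨e, _, _, fun i => ?_, rfl⟩
  · obtain ⟨he, hed, hf, hg⟩ := hfg i
    exact ⟨he, hed, hf.re, hg.re⟩
  · obtain ⟨he, hed, hf, hg⟩ := hfg i
    exact ⟨he, hed, hf.im, hg.im.neg⟩

end MvPolynomial

theorem stmt_7_general (n d s : ℕ) (u : MvPolynomial (Fin n) ℝ)
    (e : Fin s → ℕ) (f g : Fin s → MvPolynomial (Fin n) ℂ)
    (hfg : ∀ i, 0 < e i ∧ e i < d ∧ (f i).IsHomogeneous (e i) ∧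
      (g i).IsHomogeneous (d - e i))
    (hdec : MvPolynomial.map (algebraMap ℝ ℂ) u = ∑ i, f i * g i) :
    ∃ (e' : Fin (2 * s) → ℕ) (p q : Fin (2 * s) → MvPolynomial (Fin n) ℝ),
      (∀ i, 0 < e' i ∧ e' i < d ∧ (p i).IsHomogeneous (e' i) ∧
        (q i).IsHomogeneous (d - e' i)) ∧
      u = ∑ i, p i * q i :=
  HasStrengthDecomposition.of_map_complex ⟨e, f, g, hfg, hdec⟩

/-- If a real degree-`d` form `u` has a complex strength decomposition with `s` summands,
then it has a real strength decomposition with `2s` summands. -/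
theorem stmt_7 (n d s : ℕ) (u : MvPolynomial (Fin n) ℝ) (hu : u.IsHomogeneous d)
    (e : Fin s → ℕ) (f g : Fin s → MvPolynomial (Fin n) ℂ)
    (hfg : ∀ i, 0 < e i ∧ e i < d ∧ (f i).IsHomogeneous (e i) ∧
      (g i).IsHomogeneous (d - e i))
    (hdec : MvPolynomial.map (algebraMap ℝ ℂ) u = ∑ i, f i * g i) :
    ∃ (e' : Fin (2 * s) → ℕ) (p q : Fin (2 * s) → MvPolynomial (Fin n) ℝ),
      (∀ i, 0 < e' i ∧ e' i < d ∧ (p i).IsHomogeneous (e' i) ∧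
        (q i).IsHomogeneous (d - e' i)) ∧
      u = ∑ i, p i * q i :=
  stmt_7_general n d s u e f g hfg hdec
end

section
/- Let S be a smooth projective surface with Pic(S) ≅ ℤ², freely generated by classes [A], [B] with A an integral curve with A² < 0 and B ample. If E ⊂ S is an integral curve with E² < 0 and E ≠ A, then [A] and [E] form a basis of Pic(S) ⊗ ℚ, and the effective cone of Pic(S) ⊗ ℚ equals { h[A] + ℓ[E] : h, ℓ ∈ ℚ≥0 }. -/
/-!
The classes `A` and `E` are two curves of negative self-intersection that meet
nonnegatively, and `B` pairs positively with both. Writing a class `x = h A + ℓ E`,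
if `h < 0` then `0 ≤ E · x = h (E · A) + ℓ E²` forces `ℓ ≤ 0`, and then `B · x < 0`;
symmetrically `ℓ ≥ 0`. Every integral curve other than `A`, `E` meets `A`, `E`
nonnegatively and `B` positively, so it lies in the cone spanned by `A` and `E`, and
applying the same argument to `x = 0` shows that `A`, `E` are independent.
-/

section

variable {𝕜 V ι : Type*} [Semiring 𝕜] [PartialOrder 𝕜] [AddCommMonoid V] [Module 𝕜 V]

variable (𝕜) in
def pairCone (A E : V) : Set V :=
  {x | ∃ h ℓ : 𝕜, 0 ≤ h ∧ 0 ≤ ℓ ∧ x = h • A + ℓ • E}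

variable (𝕜) in
def nonnegSpan (cls : ι → V) : Set V :=
  {x | ∃ (s : Finset ι) (c : ι → 𝕜), (∀ i, 0 ≤ c i) ∧ x = ∑ i ∈ s, c i • cls i}

lemma nonnegSpan_subset_pairCone [IsOrderedRing 𝕜] {cls : ι → V} {A E : V}
    (hcls : ∀ i, cls i ∈ pairCone 𝕜 A E) : nonnegSpan 𝕜 cls ⊆ pairCone 𝕜 A E := by
  rintro _ ⟨s, c, hc, rfl⟩
  choose H L hH hL hHL using hcls
  refine ⟨∑ i ∈ s, c i * H i, ∑ i ∈ s, c i * L i,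
    Finset.sum_nonneg fun i _ => mul_nonneg (hc i) (hH i),
    Finset.sum_nonneg fun i _ => mul_nonneg (hc i) (hL i), ?_⟩
  rw [Finset.sum_smul, Finset.sum_smul, ← Finset.sum_add_distrib]
  refine Finset.sum_congr rfl fun i _ => ?_
  rw [hHL i, smul_add, smul_smul, smul_smul]

lemma pairCone_subset_nonnegSpan {cls : ι → V} {i j : ι} (hij : i ≠ j) :
    pairCone 𝕜 (cls i) (cls j) ⊆ nonnegSpan 𝕜 cls := by
  classical
  rintro _ ⟨h, ℓ, hh, hℓ, rfl⟩
  refine ⟨{i, j}, fun k => if k = i then h else if k = j then ℓ else 0,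
    fun k => by dsimp only; split_ifs <;> simp [hh, hℓ], ?_⟩
  simp [Finset.sum_pair hij, hij.symm]

end

lemma span_pair_eq_top_of_linearIndependent {K V : Type*} [DivisionRing K] [AddCommGroup V]
    [Module K V] {A B E : V}
    (hAB : LinearIndependent K ![A, B]) (hspan : Submodule.span K {A, B} = ⊤)
    (hAE : LinearIndependent K ![A, E]) : Submodule.span K {A, E} = ⊤ := by
  have hrank : Module.finrank K V = 2 := by
    rw [← finrank_top, ← hspan, ← Matrix.range_cons_cons_empty, finrank_span_eq_card hAB,
      Fintype.card_fin]
  rw [← Matrix.range_cons_cons_empty]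
  exact hAE.span_eq_top_of_card_eq_finrank (by rw [hrank, Fintype.card_fin])

section

variable {𝕜 V : Type*} [Field 𝕜] [LinearOrder 𝕜] [IsStrictOrderedRing 𝕜]
  [AddCommGroup V] [Module 𝕜 V]

lemma nonneg_left_of_apply_nonneg (b : V →ₗ[𝕜] V →ₗ[𝕜] 𝕜) {A E B : V} {h ℓ : 𝕜}
    (hE2 : b E E < 0) (hEA : 0 ≤ b E A) (hBA : 0 < b B A) (hBE : 0 ≤ b B E)
    (hEx : 0 ≤ b E (h • A + ℓ • E)) (hBx : 0 ≤ b B (h • A + ℓ • E)) : 0 ≤ h := by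
  simp only [map_add, map_smul, smul_eq_mul] at hEx hBx
  by_contra! hh
  have hℓ : ℓ ≤ 0 := by nlinarith
  nlinarith

lemma coeffs_nonneg_of_apply_nonneg (b : V →ₗ[𝕜] V →ₗ[𝕜] 𝕜) {A E B : V} {h ℓ : 𝕜}
    (hA2 : b A A < 0) (hE2 : b E E < 0) (hAE : 0 ≤ b A E) (hEA : 0 ≤ b E A)
    (hBA : 0 < b B A) (hBE : 0 < b B E) (hAx : 0 ≤ b A (h • A + ℓ • E))
    (hEx : 0 ≤ b E (h • A + ℓ • E)) (hBx : 0 ≤ b B (h • A + ℓ • E)) : 0 ≤ h ∧ 0 ≤ ℓ := by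
  refine ⟨nonneg_left_of_apply_nonneg b hE2 hEA hBA hBE.le hEx hBx, ?_⟩
  rw [add_comm] at hAx hBx
  exact nonneg_left_of_apply_nonneg b hA2 hAE hBE hBA.le hAx hBx

lemma linearIndependent_pair_of_apply_self_neg (b : V →ₗ[𝕜] V →ₗ[𝕜] 𝕜) {A E B : V}
    (hA2 : b A A < 0) (hE2 : b E E < 0) (hAE : 0 ≤ b A E) (hEA : 0 ≤ b E A)
    (hBA : 0 < b B A) (hBE : 0 < b B E) : LinearIndependent 𝕜 ![A, E] := by
  rw [LinearIndependent.pair_iff]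
  intro h ℓ hx
  have hneg : (-h) • A + (-ℓ) • E = 0 := by rw [neg_smul, neg_smul, ← neg_add, hx, neg_zero]
  obtain ⟨hh, hℓ⟩ :=
    coeffs_nonneg_of_apply_nonneg (h := h) (ℓ := ℓ) b hA2 hE2 hAE hEA hBA hBE
    (by rw [hx, map_zero]) (by rw [hx, map_zero]) (by rw [hx, map_zero])
  obtain ⟨hh', hℓ'⟩ :=
    coeffs_nonneg_of_apply_nonneg (h := -h) (ℓ := -ℓ) b hA2 hE2 hAE hEA hBA hBE
    (by rw [hneg, map_zero]) (by rw [hneg, map_zero]) (by rw [hneg, map_zero])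
  exact ⟨by linarith, by linarith⟩

lemma mem_pairCone_of_apply_nonneg (b : V →ₗ[𝕜] V →ₗ[𝕜] 𝕜) {A E B x : V}
    (hspan : Submodule.span 𝕜 {A, E} = ⊤)
    (hA2 : b A A < 0) (hE2 : b E E < 0) (hAE : 0 ≤ b A E) (hEA : 0 ≤ b E A)
    (hBA : 0 < b B A) (hBE : 0 < b B E)
    (hAx : 0 ≤ b A x) (hEx : 0 ≤ b E x) (hBx : 0 ≤ b B x) : x ∈ pairCone 𝕜 A E := by
  obtain ⟨h, ℓ, rfl⟩ := Submodule.mem_span_pair.1 (hspan ▸ Submodule.mem_top : x ∈ _)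
  obtain ⟨hh, hℓ⟩ := coeffs_nonneg_of_apply_nonneg b hA2 hE2 hAE hEA hBA hBE hAx hEx hBx
  exact ⟨h, ℓ, hh, hℓ, rfl⟩

end

theorem stmt_14_general {V : Type*} [AddCommGroup V] [Module ℚ V]
    (b : V →ₗ[ℚ] V →ₗ[ℚ] ℚ)
    {ι : Type*} (cls : ι → V)
    (hmeet : ∀ i j : ι, cls i ≠ cls j → 0 ≤ b (cls i) (cls j))
    (Eff : Set V)
    (hEff : Eff = {x | ∃ (s : Finset ι) (c : ι → ℚ),
      (∀ i, 0 ≤ c i) ∧ x = ∑ i ∈ s, c i • cls i})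
    (A B E : V) (iA iE : ι) (hA : cls iA = A) (hE : cls iE = E)
    (hbasis : LinearIndependent ℚ ![A, B] ∧ Submodule.span ℚ {A, B} = ⊤)
    (hA2 : b A A < 0) (hE2 : b E E < 0) (hAE : A ≠ E)
    (hample : ∀ i : ι, 0 < b B (cls i)) :
    (LinearIndependent ℚ ![A, E] ∧ Submodule.span ℚ {A, E} = ⊤) ∧
    Eff = {x | ∃ h ℓ : ℚ, 0 ≤ h ∧ 0 ≤ ℓ ∧ x = h • A + ℓ • E} := by
  subst hA hE hEff
  have hAE' : 0 ≤ b (cls iA) (cls iE) := hmeet iA iE hAE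
  have hEA : 0 ≤ b (cls iE) (cls iA) := hmeet iE iA hAE.symm
  have hind := linearIndependent_pair_of_apply_self_neg b hA2 hE2 hAE' hEA (hample iA) (hample iE)
  have hspan := span_pair_eq_top_of_linearIndependent hbasis.1 hbasis.2 hind
  refine ⟨⟨hind, hspan⟩, subset_antisymm (nonnegSpan_subset_pairCone fun i => ?_)
    (pairCone_subset_nonnegSpan fun h => hAE (congrArg cls h))⟩
  by_cases hiA : cls i = cls iA
  · exact ⟨1, 0, zero_le_one, le_rfl, by simp [hiA]⟩
  by_cases hiE : cls i = cls iE
  · exact ⟨0, 1, le_rfl, zero_le_one, by simp [hiE]⟩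
  exact mem_pairCone_of_apply_nonneg b hspan hA2 hE2 hAE' hEA (hample iA) (hample iE)
    (hmeet iA i (Ne.symm hiA)) (hmeet iE i (Ne.symm hiE)) (hample i).le

/-- Abstract form of Proposition (effective cone of a surface with `Pic ≅ ℤ²`):
`V = Pic(S) ⊗ ℚ` with intersection form `b`; the effective cone `Eff` is the set of
nonnegative combinations of classes of integral curves (`cls : ι → V`), distinct integral
curves meet nonnegatively, `A, B` is a basis with `A` an integral curve with `A² < 0` and
`B` an ample effective class, and `E ≠ A` is an integral curve with `E² < 0`.  Then
`[A], [E]` form a basis of `Pic(S) ⊗ ℚ` and the effective cone equals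
`{ h·A + ℓ·E : h, ℓ ≥ 0 }`. -/
theorem stmt_14 {V : Type*} [AddCommGroup V] [Module ℚ V]
    (b : V →ₗ[ℚ] V →ₗ[ℚ] ℚ) (hsymm : ∀ x y, b x y = b y x)
    {ι : Type*} (cls : ι → V)
    (hmeet : ∀ i j : ι, cls i ≠ cls j → 0 ≤ b (cls i) (cls j))
    (Eff : Set V)
    (hEff : Eff = {x | ∃ (s : Finset ι) (c : ι → ℚ),
      (∀ i, 0 ≤ c i) ∧ x = ∑ i ∈ s, c i • cls i})
    (A B E : V) (iA iE iB : ι) (hA : cls iA = A) (hE : cls iE = E) (hB : cls iB = B)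
    (hbasis : LinearIndependent ℚ ![A, B] ∧ Submodule.span ℚ {A, B} = ⊤)
    (hA2 : b A A < 0) (hE2 : b E E < 0) (hAE : A ≠ E)
    (hample : ∀ i : ι, 0 < b B (cls i)) :
    (LinearIndependent ℚ ![A, E] ∧ Submodule.span ℚ {A, E} = ⊤) ∧
    Eff = {x | ∃ h ℓ : ℚ, 0 ≤ h ∧ 0 ≤ ℓ ∧ x = h • A + ℓ • E} :=
  stmt_14_general b cls hmeet Eff hEff A B E iA iE hA hE hbasis hA2 hE2 hAE hample
end
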